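/- arXiv:2111.01128 — 12 statements merged into one kernel-verified Lean document; each statement's English description precedes it below -/
import Mathlib

section
/- For $a, b > 0$ with $a \ne b$ and $v \in [0,1]$, with $\mu := \min\{1-v,v\}$, the Heinz mean satisfies $\sqrt{ab} \le Hz_v(a,b) \le \left(1 + \frac{\mu^2}{2}(\log a - \log b)^2\right) Hz_v(a,b) \le \frac{a+b}{2}$. -/
/-!
Substituting `a = e^L`, `b = e^M` turns every mean in sight into `√(ab) cosh(t (L - M))`: the
Heinz mean has `t = 1/2 - v` and the arithmetic mean has `t = 1/2`. Since
`|1/2 - v| + min (1 - v) v = 1/2`, the addition formula for `cosh` together with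
`cosh y ≥ 1 + y²/2` and `sinh · sinh ≥ 0` yields the refined upper bound.
-/

open Real

lemma one_add_sq_div_two_le_cosh (y : ℝ) : 1 + y ^ 2 / 2 ≤ cosh y := by
  have hcosh : cosh y = 1 + 2 * sinh (y / 2) ^ 2 := by
    have := cosh_two_mul (y / 2)
    rw [cosh_sq, mul_div_cancel₀ _ two_ne_zero] at this
    linarith
  have hsinh : |y / 2| ≤ |sinh (y / 2)| := by
    rw [abs_sinh]
    exact self_le_sinh_iff.2 (abs_nonneg _)
  rw [hcosh]
  nlinarith [sq_le_sq.2 hsinh]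

lemma sinh_mul_mul_sinh_mul_nonneg {c μ : ℝ} (hc : 0 ≤ c) (hμ : 0 ≤ μ) (x : ℝ) :
    0 ≤ sinh (c * x) * sinh (μ * x) := by
  rcases le_total 0 x with hx | hx
  · exact mul_nonneg (sinh_nonneg_iff.2 (mul_nonneg hc hx)) (sinh_nonneg_iff.2 (mul_nonneg hμ hx))
  · exact mul_nonneg_of_nonpos_of_nonpos
      (sinh_nonpos_iff.2 (mul_nonpos_of_nonneg_of_nonpos hc hx))
      (sinh_nonpos_iff.2 (mul_nonpos_of_nonneg_of_nonpos hμ hx))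

lemma one_add_sq_mul_cosh_le_cosh_abs_add {μ : ℝ} (hμ : 0 ≤ μ) (t x : ℝ) :
    (1 + μ ^ 2 / 2 * x ^ 2) * cosh (t * x) ≤ cosh ((|t| + μ) * x) := by
  have hcosh_abs : cosh (t * x) = cosh (|t| * x) := by
    rw [← cosh_abs, abs_mul, ← cosh_abs (|t| * x), abs_mul, abs_abs]
  have hμx := mul_le_mul_of_nonneg_left (one_add_sq_div_two_le_cosh (μ * x))
    (cosh_pos (|t| * x)).le
  have hsinh := sinh_mul_mul_sinh_mul_nonneg (abs_nonneg t) hμ x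
  rw [hcosh_abs, add_mul |t| μ x, cosh_add]
  linarith

lemma rpow_mul_rpow_add_rpow_mul_rpow_div_two {a b : ℝ} (ha : 0 < a) (hb : 0 < b) (v : ℝ) :
    (a ^ (1 - v) * b ^ v + a ^ v * b ^ (1 - v)) / 2 =
      √(a * b) * cosh ((1 / 2 - v) * (log a - log b)) := by
  rw [← exp_log (mul_pos ha hb), ← exp_half, log_mul ha.ne' hb.ne', cosh_eq,
    rpow_def_of_pos ha, rpow_def_of_pos ha, rpow_def_of_pos hb, rpow_def_of_pos hb,
    ← exp_add, ← exp_add, mul_div_assoc', mul_add, ← exp_add, ← exp_add]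
  congr 3 <;> ring

lemma abs_one_half_sub_add_min (v : ℝ) :
    |1 / 2 - v| + min (1 - v) v = 1 / 2 := by
  rcases le_total v (1 / 2) with hv | hv
  · rw [abs_of_nonneg (by linarith), min_eq_right (by linarith)]; ring
  · rw [abs_of_nonpos (by linarith), min_eq_left (by linarith)]; ring

theorem stmt2_general (a b v : ℝ) (ha : 0 < a) (hb : 0 < b)
    (hv0 : 0 ≤ v) (hv1 : v ≤ 1) :
    Real.sqrt (a * b) ≤ (a ^ (1 - v) * b ^ v + a ^ v * b ^ (1 - v)) / 2 ∧
    (a ^ (1 - v) * b ^ v + a ^ v * b ^ (1 - v)) / 2 ≤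
      (1 + (min (1 - v) v) ^ 2 / 2 * (Real.log a - Real.log b) ^ 2) *
        ((a ^ (1 - v) * b ^ v + a ^ v * b ^ (1 - v)) / 2) ∧
    (1 + (min (1 - v) v) ^ 2 / 2 * (Real.log a - Real.log b) ^ 2) *
        ((a ^ (1 - v) * b ^ v + a ^ v * b ^ (1 - v)) / 2) ≤ (a + b) / 2 := by
  have hHeinz := rpow_mul_rpow_add_rpow_mul_rpow_div_two ha hb v
  have hAM : (a + b) / 2 = √(a * b) * cosh (1 / 2 * (log a - log b)) := by
    simpa using rpow_mul_rpow_add_rpow_mul_rpow_div_two ha hb 0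
  have hμ : 0 ≤ min (1 - v) v := le_min (by linarith) hv0
  rw [hHeinz, hAM]
  refine ⟨le_mul_of_one_le_right (sqrt_nonneg _) (one_le_cosh _),
    le_mul_of_one_le_left (by positivity) (le_add_of_nonneg_right (by positivity)), ?_⟩
  calc (1 + min (1 - v) v ^ 2 / 2 * (log a - log b) ^ 2) *
        (√(a * b) * cosh ((1 / 2 - v) * (log a - log b)))
      = √(a * b) * ((1 + min (1 - v) v ^ 2 / 2 * (log a - log b) ^ 2) *
          cosh ((1 / 2 - v) * (log a - log b))) := by ring
    _ ≤ √(a * b) * cosh ((|1 / 2 - v| + min (1 - v) v) * (log a - log b)) :=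
        mul_le_mul_of_nonneg_left (one_add_sq_mul_cosh_le_cosh_abs_add hμ _ _) (sqrt_nonneg _)
    _ = √(a * b) * cosh (1 / 2 * (log a - log b)) := by
        rw [abs_one_half_sub_add_min]

theorem stmt2 (a b v : ℝ) (ha : 0 < a) (hb : 0 < b) (hab : a ≠ b)
    (hv0 : 0 ≤ v) (hv1 : v ≤ 1) :
    Real.sqrt (a * b) ≤ (a ^ (1 - v) * b ^ v + a ^ v * b ^ (1 - v)) / 2 ∧
    (a ^ (1 - v) * b ^ v + a ^ v * b ^ (1 - v)) / 2 ≤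
      (1 + (min (1 - v) v) ^ 2 / 2 * (Real.log a - Real.log b) ^ 2) *
        ((a ^ (1 - v) * b ^ v + a ^ v * b ^ (1 - v)) / 2) ∧
    (1 + (min (1 - v) v) ^ 2 / 2 * (Real.log a - Real.log b) ^ 2) *
        ((a ^ (1 - v) * b ^ v + a ^ v * b ^ (1 - v)) / 2) ≤ (a + b) / 2 :=
  stmt2_general a b v ha hb hv0 hv1
end

section
/- For $a, b > 0$ with $a \ne b$ and $v \in [0,1]$, one has $\frac{a-b}{\log a - \log b} \le \frac{1}{2}\left((1-v)a + vb\right) + \frac{1}{2} a^v b^{1-v}$. -/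
/-! With `m = a ^ v * b ^ (1 - v)` one has `log m - log b = v (log a - log b)` and
`log a - log m = (1 - v) (log a - log b)`, so the logarithmic mean splits as
`L(a, b) = v L(m, b) + (1 - v) L(a, m)` (this is `∫₀¹ a ^ t b ^ (1 - t) dt` cut at `t = v`).
Bounding each piece by the arithmetic mean, `L(x, y) ≤ (x + y) / 2`, gives the claim. -/

open Real

/-- At `a = b` division by zero makes `logMean a a = 0` rather than `a`. -/
noncomputable def logMean (a b : ℝ) : ℝ := (a - b) / (log a - log b)

lemma logMean_comm (a b : ℝ) : logMean a b = logMean b a := by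
  rw [logMean, logMean, ← neg_div_neg_eq, neg_sub, neg_sub]

/-- The exponential form of `L(x, y) ≤ (x + y) / 2`, equivalently `tanh (w / 2) ≤ w / 2`. -/
lemma two_mul_exp_sub_one_le {w : ℝ} (hw : 0 ≤ w) : 2 * (exp w - 1) ≤ w * (1 + exp w) := by
  let f : ℝ → ℝ := fun u ↦ u * (1 + exp u) - 2 * (exp u - 1)
  have hf' (u : ℝ) : HasDerivAt f (1 - (1 - u) * exp u) u :=
    (((hasDerivAt_id' u).mul ((hasDerivAt_exp u).const_add 1)).sub
      (((hasDerivAt_exp u).sub_const 1).const_mul 2)).congr_deriv (by ring)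
  have hf'_nonneg (u : ℝ) : 0 ≤ 1 - (1 - u) * exp u := by
    have h : (1 - u) * exp u ≤ exp (-u) * exp u :=
      mul_le_mul_of_nonneg_right (by linarith [add_one_le_exp (-u)]) (exp_pos u).le
    rw [← exp_add, neg_add_cancel, exp_zero] at h
    linarith
  have h := monotone_of_hasDerivAt_nonneg hf' hf'_nonneg hw
  simp only [f, exp_zero] at h
  linarith

lemma logMean_le_add_div_two_of_lt {a b : ℝ} (hb : 0 < b) (hba : b < a) :
    logMean a b ≤ (a + b) / 2 := by
  rw [logMean]
  set ℓ := log a - log b with hℓ_def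
  have hℓ : 0 < ℓ := sub_pos.2 (log_lt_log hb hba)
  have ha : a = b * exp ℓ := by
    rw [hℓ_def, exp_sub, exp_log (hb.trans hba), exp_log hb]
    field_simp
  have key := mul_le_mul_of_nonneg_left (two_mul_exp_sub_one_le hℓ.le) hb.le
  rw [div_le_iff₀ hℓ, ha]
  linarith

lemma logMean_le_add_div_two {a b : ℝ} (ha : 0 < a) (hb : 0 < b) :
    logMean a b ≤ (a + b) / 2 := by
  rcases lt_trichotomy a b with hab | rfl | hab
  · rw [logMean_comm, add_comm]
    exact logMean_le_add_div_two_of_lt ha hab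
  · simp only [logMean, sub_self, div_zero]
    positivity
  · exact logMean_le_add_div_two_of_lt hb hab

lemma logMean_eq_split {a b : ℝ} (ha : 0 < a) (hb : 0 < b) (v : ℝ) :
    logMean a b = v * logMean (a ^ v * b ^ (1 - v)) b
      + (1 - v) * logMean a (a ^ v * b ^ (1 - v)) := by
  set m := a ^ v * b ^ (1 - v)
  have hlog_m : log m = v * log a + (1 - v) * log b := by
    rw [log_mul (rpow_pos_of_pos ha v).ne' (rpow_pos_of_pos hb _).ne', log_rpow ha, log_rpow hb]
  have hlow : log m - log b = v * (log a - log b) := by rw [hlog_m]; ring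
  have hhigh : log a - log m = (1 - v) * (log a - log b) := by rw [hlog_m]; ring
  have hscale (t x : ℝ) (hx : t = 0 → x = 0) :
      t * (x / (t * (log a - log b))) = x / (log a - log b) := by
    rcases eq_or_ne t 0 with rfl | ht
    · simp [hx rfl]
    · rw [← mul_div_assoc, mul_div_mul_left _ _ ht]
  rw [logMean, logMean, logMean, hlow, hhigh,
    hscale v _ (fun hv ↦ by simp [m, hv]),
    hscale (1 - v) _ (fun hv ↦ by simp [m, ← sub_eq_zero.1 hv]), ← add_div]
  ring

theorem stmt3_general (a b v : ℝ) (ha : 0 < a) (hb : 0 < b)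
    (hv0 : 0 ≤ v) (hv1 : v ≤ 1) :
    (a - b) / (Real.log a - Real.log b) ≤ ((1 - v) * a + v * b) / 2 + a ^ v * b ^ (1 - v) / 2 := by
  set m := a ^ v * b ^ (1 - v)
  have hm : 0 < m := by positivity
  have hv1' : 0 ≤ 1 - v := sub_nonneg.2 hv1
  calc (a - b) / (log a - log b)
      = v * logMean m b + (1 - v) * logMean a m := logMean_eq_split ha hb v
    _ ≤ v * ((m + b) / 2) + (1 - v) * ((a + m) / 2) := by
        gcongr
        · exact logMean_le_add_div_two hm hb
        · exact logMean_le_add_div_two ha hm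
    _ = ((1 - v) * a + v * b) / 2 + m / 2 := by ring

theorem stmt3 (a b v : ℝ) (ha : 0 < a) (hb : 0 < b) (hab : a ≠ b)
    (hv0 : 0 ≤ v) (hv1 : v ≤ 1) :
    (a - b) / (Real.log a - Real.log b) ≤ ((1 - v) * a + v * b) / 2 + a ^ v * b ^ (1 - v) / 2 :=
  stmt3_general a b v ha hb hv0 hv1
end

section
/- For $a, b > 0$ with $a \ne b$ and $v \in [0,1]$, one has $\frac{a-b}{\log a - \log b} \le \frac{1}{2} \cdot \frac{a+b}{2} + \frac{1}{2} \cdot \frac{a^{1-v}b^v + a^v b^{1-v}}{2}$. -/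
/-!
The logarithmic mean is bounded by the power mean of order `1/2`,
`L(a, b) ≤ ((√a + √b) / 2) ^ 2 = A(a, b) / 2 + G(a, b) / 2`, which follows from
`log x - log y ≥ 2 (x - y) / (x + y)` applied to `x = √a`, `y = √b`. Since the two Heinz
terms have product `a b`, AM-GM gives `G(a, b) ≤ Hz_v(a, b)` for every real `v`.
-/

open Real

lemma two_mul_le_log_one_add_sub_log_one_sub {x : ℝ} (hx0 : 0 ≤ x) (hx1 : x < 1) :
    2 * x ≤ log (1 + x) - log (1 - x) := by
  have hsum := hasSum_log_sub_log_of_abs_lt_one (abs_lt.mpr ⟨by linarith, hx1⟩)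
  simpa using le_hasSum hsum 0 fun k _ => by positivity

lemma two_mul_sub_div_add_le_log_sub_log {x y : ℝ} (hy : 0 < y) (hyx : y ≤ x) :
    2 * (x - y) / (x + y) ≤ log x - log y := by
  have hx : 0 < x := hy.trans_le hyx
  have hxy : 0 < x + y := by linarith
  have hplus : 1 + (x - y) / (x + y) = 2 * x / (x + y) := by field_simp; ring
  have hminus : 1 - (x - y) / (x + y) = 2 * y / (x + y) := by field_simp; ring
  have key := two_mul_le_log_one_add_sub_log_one_sub (x := (x - y) / (x + y))
    (div_nonneg (by linarith) hxy.le) ((div_lt_one hxy).mpr (by linarith))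
  rw [hplus, hminus, log_div (by positivity) hxy.ne', log_div (by positivity) hxy.ne',
    log_mul two_ne_zero hx.ne', log_mul two_ne_zero hy.ne'] at key
  linarith [mul_div_assoc 2 (x - y) (x + y)]

lemma div_log_sub_log_le_sq_sqrt_add_sqrt_of_lt {a b : ℝ} (hb : 0 < b) (hba : b < a) :
    (a - b) / (log a - log b) ≤ ((√a + √b) / 2) ^ 2 := by
  have ha : 0 < a := hb.trans hba
  have hsb : 0 < √b := sqrt_pos.mpr hb
  have hsba : 0 < √a - √b := sub_pos.mpr (sqrt_lt_sqrt hb.le hba)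
  have hlog : 4 * (√a - √b) / (√a + √b) ≤ log a - log b := by
    have := two_mul_sub_div_add_le_log_sub_log hsb (by linarith)
    rw [log_sqrt ha.le, log_sqrt hb.le] at this
    linarith [mul_div_assoc 2 (√a - √b) (√a + √b), mul_div_assoc 4 (√a - √b) (√a + √b)]
  have hsq : a - b = (√a - √b) * (√a + √b) := by
    nlinarith [sq_sqrt ha.le, sq_sqrt hb.le]
  calc (a - b) / (log a - log b)
      ≤ (a - b) / (4 * (√a - √b) / (√a + √b)) := by
        gcongr
    _ = ((√a + √b) / 2) ^ 2 := by
        rw [hsq]; field_simp; norm_num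

lemma div_log_sub_log_le_sq_sqrt_add_sqrt {a b : ℝ} (ha : 0 < a) (hb : 0 < b) :
    (a - b) / (log a - log b) ≤ ((√a + √b) / 2) ^ 2 := by
  rcases lt_trichotomy a b with hab | rfl | hab
  · rw [← neg_div_neg_eq, neg_sub, neg_sub, add_comm √a]
    exact div_log_sub_log_le_sq_sqrt_add_sqrt_of_lt ha hab
  · simp only [sub_self, zero_div] -- the junk value `0 / 0 = 0`
    positivity
  · exact div_log_sub_log_le_sq_sqrt_add_sqrt_of_lt hb hab

lemma two_mul_sqrt_mul_le_heinz {a b : ℝ} (ha : 0 < a) (hb : 0 < b) (v : ℝ) :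
    2 * √(a * b) ≤ a ^ (1 - v) * b ^ v + a ^ v * b ^ (1 - v) := by
  set p := a ^ (1 - v) * b ^ v
  set q := a ^ v * b ^ (1 - v)
  have hpq : p * q = a * b := by
    calc p * q = a ^ (1 - v + v) * b ^ (v + (1 - v)) := by
          rw [rpow_add ha, rpow_add hb]; ring
      _ = a * b := by norm_num
  rw [← hpq, sqrt_mul (by positivity)]
  nlinarith [two_mul_le_add_sq √p √q, sq_sqrt (show 0 ≤ p by positivity),
    sq_sqrt (show 0 ≤ q by positivity)]

theorem stmt4_general (a b v : ℝ) (ha : 0 < a) (hb : 0 < b) :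
    (a - b) / (Real.log a - Real.log b) ≤
      (1 / 2) * ((a + b) / 2) + (1 / 2) * ((a ^ (1 - v) * b ^ v + a ^ v * b ^ (1 - v)) / 2) := by
  have hsq : ((√a + √b) / 2) ^ 2 = (a + b) / 4 + √(a * b) / 2 := by
    rw [sqrt_mul ha.le]
    nlinarith [sq_sqrt ha.le, sq_sqrt hb.le]
  linarith [div_log_sub_log_le_sq_sqrt_add_sqrt ha hb, two_mul_sqrt_mul_le_heinz ha hb v]

theorem stmt4 (a b v : ℝ) (ha : 0 < a) (hb : 0 < b) (hab : a ≠ b)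
    (hv0 : 0 ≤ v) (hv1 : v ≤ 1) :
    (a - b) / (Real.log a - Real.log b) ≤
      (1 / 2) * ((a + b) / 2) + (1 / 2) * ((a ^ (1 - v) * b ^ v + a ^ v * b ^ (1 - v)) / 2) :=
  stmt4_general a b v ha hb
end

section
/- For $t > 0$ with $t \ne 1$, one has $\frac{t-1}{\log t} \le \frac{t^{t/(t-1)}}{e} \le \frac{t^2+1}{t+1}$. -/
/-!
Writing `I(a, b) = exp (⨍ x in [a, b], log x)` for the identric mean, the middle term is `I(1, t)`.
Jensen's inequality for the convex function `exp`, applied to the averages of `log` and of `-log`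
over `[1, t]`, gives `I ≤ ⨍ x = (1 + t) / 2` and `I⁻¹ ≤ ⨍ x⁻¹ = L(1, t)⁻¹`; finally
`(1 + t) / 2 ≤ (t ^ 2 + 1) / (t + 1)` is `(t - 1) ^ 2 ≥ 0`.
-/

open MeasureTheory Set Real

theorem exp_setAverage_le_setAverage_exp {α : Type*} [MeasurableSpace α] {μ : Measure α}
    {s : Set α} {f : α → ℝ} (h0 : μ s ≠ 0) (hs : μ s ≠ ⊤) (hf : IntegrableOn f s μ)
    (hexp : IntegrableOn (fun x ↦ exp (f x)) s μ) :
    exp (⨍ x in s, f x ∂μ) ≤ ⨍ x in s, exp (f x) ∂μ :=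
  convexOn_exp.map_set_average_le continuous_exp.continuousOn isClosed_univ h0 hs
    (by simp) hf hexp

theorem setAverage_uIcc_eq_mul_intervalIntegral (f : ℝ → ℝ) (a b : ℝ) :
    ⨍ x in uIcc a b, f x = (b - a)⁻¹ * ∫ x in a..b, f x := by
  wlog hab : a ≤ b generalizing a b
  · rw [uIcc_comm, this b a (le_of_not_ge hab), intervalIntegral.integral_symm, ← neg_sub,
      inv_neg, neg_mul_neg]
  rw [setAverage_eq, uIcc_of_le hab, integral_Icc_eq_integral_Ioc,
    ← intervalIntegral.integral_of_le hab, Real.volume_real_Icc_of_le hab, smul_eq_mul]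

namespace Real

/-- The logarithmic mean `L(a, b)`. -/
noncomputable def logMean (a b : ℝ) : ℝ := (b - a) / (log b - log a)

/-- The identric mean `I(a, b) = e⁻¹ (b ^ b / a ^ a) ^ (1 / (b - a))`. -/
noncomputable def identricMean (a b : ℝ) : ℝ := exp (⨍ x in uIcc a b, log x)

variable {a b : ℝ}

theorem setAverage_log_uIcc (a b : ℝ) :
    ⨍ x in uIcc a b, log x = (b * log b - a * log a - b + a) / (b - a) := by
  rw [setAverage_uIcc_eq_mul_intervalIntegral, integral_log, inv_mul_eq_div]

theorem setAverage_id_uIcc (hab : a ≠ b) : ⨍ x in uIcc a b, x = (a + b) / 2 := by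
  rw [setAverage_uIcc_eq_mul_intervalIntegral, integral_id]
  field_simp [sub_ne_zero.mpr hab.symm]
  ring

theorem setAverage_inv_uIcc (ha : 0 < a) (hb : 0 < b) :
    ⨍ x in uIcc a b, x⁻¹ = (log b - log a) / (b - a) := by
  rw [setAverage_uIcc_eq_mul_intervalIntegral, integral_inv_of_pos ha hb, log_div hb.ne' ha.ne',
    inv_mul_eq_div]

theorem exp_setAverage_uIcc_le {g : ℝ → ℝ} (hab : a ≠ b) (hg : ContinuousOn g (uIcc a b)) :
    exp (⨍ x in uIcc a b, g x) ≤ ⨍ x in uIcc a b, exp (g x) :=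
  exp_setAverage_le_setAverage_exp
    (by simpa [volume_interval, sub_eq_zero] using hab.symm) measure_Icc_lt_top.ne
    hg.integrableOn_uIcc (continuous_exp.comp_continuousOn hg).integrableOn_uIcc

theorem pos_of_mem_uIcc (ha : 0 < a) (hb : 0 < b) {x : ℝ} (hx : x ∈ uIcc a b) : 0 < x :=
  (lt_min ha hb).trans_le hx.1

theorem continuousOn_log_uIcc (ha : 0 < a) (hb : 0 < b) : ContinuousOn log (uIcc a b) :=
  continuousOn_log.mono fun _ hx ↦ (pos_of_mem_uIcc ha hb hx).ne'

theorem identricMean_le_add_div_two (ha : 0 < a) (hb : 0 < b) (hab : a ≠ b) :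
    identricMean a b ≤ (a + b) / 2 :=
  calc identricMean a b
      ≤ ⨍ x in uIcc a b, exp (log x) := exp_setAverage_uIcc_le hab (continuousOn_log_uIcc ha hb)
    _ = ⨍ x in uIcc a b, x := setAverage_congr_fun measurableSet_uIcc
          (.of_forall fun _ hx ↦ exp_log (pos_of_mem_uIcc ha hb hx))
    _ = (a + b) / 2 := setAverage_id_uIcc hab

theorem logMean_le_identricMean (ha : 0 < a) (hb : 0 < b) (hab : a ≠ b) :
    logMean a b ≤ identricMean a b := by
  have hinv : (identricMean a b)⁻¹ ≤ (logMean a b)⁻¹ :=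
    calc (identricMean a b)⁻¹
        = exp (⨍ x in uIcc a b, -log x) := by rw [identricMean, average_neg, exp_neg]
      _ ≤ ⨍ x in uIcc a b, exp (-log x) :=
          exp_setAverage_uIcc_le hab (continuousOn_log_uIcc ha hb).neg
      _ = ⨍ x in uIcc a b, x⁻¹ := setAverage_congr_fun measurableSet_uIcc
          (.of_forall fun _ hx ↦ by rw [exp_neg, exp_log (pos_of_mem_uIcc ha hb hx)])
      _ = (logMean a b)⁻¹ := by rw [setAverage_inv_uIcc ha hb, logMean, inv_div]
  have hI : 0 < (identricMean a b)⁻¹ := inv_pos.2 (exp_pos _)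
  simpa only [inv_inv] using inv_anti₀ hI hinv

theorem identricMean_one_left {t : ℝ} (ht : 0 < t) (ht1 : t ≠ 1) :
    identricMean 1 t = t ^ (t / (t - 1)) / exp 1 := by
  have : t - 1 ≠ 0 := sub_ne_zero.mpr ht1
  rw [identricMean, setAverage_log_uIcc, rpow_def_of_pos ht, ← exp_sub, log_one]
  congr 1
  field_simp
  ring

end Real

theorem stmt5 (t : ℝ) (ht : 0 < t) (ht1 : t ≠ 1) :
    (t - 1) / Real.log t ≤ t ^ (t / (t - 1)) / Real.exp 1 ∧
    t ^ (t / (t - 1)) / Real.exp 1 ≤ (t ^ 2 + 1) / (t + 1) := by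
  have h1t : (1 : ℝ) ≠ t := Ne.symm ht1
  rw [← Real.identricMean_one_left ht ht1]
  constructor
  · simpa [Real.logMean] using Real.logMean_le_identricMean one_pos ht h1t
  · calc Real.identricMean 1 t ≤ (1 + t) / 2 := Real.identricMean_le_add_div_two one_pos ht h1t
      _ ≤ (t ^ 2 + 1) / (t + 1) := by
        rw [div_le_div_iff₀ two_pos (by linarith)]
        nlinarith [sq_nonneg (t - 1)]
end

section
/- Define $L_v(t) := \frac{1}{\log t}\left(\frac{1-v}{v}(t - t^{1-v}) + \frac{v}{1-v}(t^{1-v}-1)\right)$ for $t > 0$, $t \ne 1$, $v \in (0,1)$. Then for fixed $t$, the function $v \mapsto L_v(t)$ is monotone increasing in $v$ when $0 < t \le 1$ and monotone decreasing in $v$ when $t \ge 1$. -/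
/-!
Write `L_v(t) = N_v(t) / log t`. For every `t > 0` the numerator `v ↦ N_v(t)` is antitone on
`(0, 1)`. Its derivative is `F / (v² (1 - v)²)`, and `F ≤ 0` follows from the tangent-line bounds
`t ^ v ≥ 1 + v log t` and `t ^ (v - 1) ≥ 1 - (1 - v) log t`: bounding `F` by `(1 - v)²` times the
first plus `v²` times the second leaves a combination that vanishes identically.
Dividing by `log t`, which is `≤ 0` for `t ≤ 1` and `≥ 0` for `t ≥ 1`, gives both monotonicity claims.
-/

open Real Set

noncomputable def weightedLogMeanNumerator (t v : ℝ) : ℝ :=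
  (1 - v) / v * (t - t ^ (1 - v)) + v / (1 - v) * (t ^ (1 - v) - 1)

lemma one_add_mul_log_le_rpow {t : ℝ} (ht : 0 < t) (x : ℝ) : 1 + x * log t ≤ t ^ x := by
  rw [rpow_def_of_pos ht, mul_comm]
  linarith [add_one_le_exp (log t * x)]

lemma numerator_of_deriv_weightedLogMeanNumerator_nonpos {t : ℝ} (ht : 0 < t) (v : ℝ) :
    v ^ 2 * (t ^ (1 - v) - 1) - (1 - v) ^ 2 * (t - t ^ (1 - v))
      + v * (1 - v) * (1 - 2 * v) * log t * t ^ (1 - v) ≤ 0 := by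
  have hupper : (1 + v * log t) * t ^ (1 - v) ≤ t := by
    calc (1 + v * log t) * t ^ (1 - v) ≤ t ^ v * t ^ (1 - v) :=
          mul_le_mul_of_nonneg_right (one_add_mul_log_le_rpow ht v) (rpow_nonneg ht.le _)
      _ = t := by rw [← rpow_add ht, add_sub_cancel, rpow_one]
  have hlower : (1 - (1 - v) * log t) * t ^ (1 - v) ≤ 1 := by
    calc (1 - (1 - v) * log t) * t ^ (1 - v) ≤ t ^ (-(1 - v)) * t ^ (1 - v) := by
          gcongr
          linarith [one_add_mul_log_le_rpow ht (-(1 - v))]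
      _ = 1 := by rw [← rpow_add ht, neg_add_cancel, rpow_zero]
  linear_combination (1 - v) ^ 2 * hupper + v ^ 2 * hlower

lemma hasDerivAt_weightedLogMeanNumerator {t v : ℝ} (ht : 0 < t) (hv₀ : v ≠ 0) (hv₁ : v ≠ 1) :
    HasDerivAt (weightedLogMeanNumerator t)
      ((v ^ 2 * (t ^ (1 - v) - 1) - (1 - v) ^ 2 * (t - t ^ (1 - v))
        + v * (1 - v) * (1 - 2 * v) * log t * t ^ (1 - v)) / (v ^ 2 * (1 - v) ^ 2)) v := by
  have hv₁' : 1 - v ≠ 0 := sub_ne_zero.2 (Ne.symm hv₁)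
  have hpow : HasDerivAt (fun x : ℝ => t ^ (1 - x)) (log t * -1 * t ^ (1 - v)) v :=
    ((hasDerivAt_id v).const_sub 1).const_rpow ht
  have hleft := (((hasDerivAt_id v).const_sub 1).div (hasDerivAt_id v) hv₀).mul
    (hpow.const_sub t)
  have hright := ((hasDerivAt_id v).div ((hasDerivAt_id v).const_sub 1) hv₁').mul
    (hpow.sub_const 1)
  refine (hleft.add hright).congr_deriv (f := weightedLogMeanNumerator t) ?_
  simp only [id, Pi.div_apply]
  field_simp
  ring

lemma antitoneOn_weightedLogMeanNumerator {t : ℝ} (ht : 0 < t) :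
    AntitoneOn (weightedLogMeanNumerator t) (Ioo 0 1) := by
  have hderiv : ∀ x ∈ Ioo (0 : ℝ) 1, HasDerivAt (weightedLogMeanNumerator t) _ x :=
    fun x hx => hasDerivAt_weightedLogMeanNumerator ht hx.1.ne' hx.2.ne
  refine antitoneOn_of_hasDerivWithinAt_nonpos (convex_Ioo 0 1)
    (fun x hx => (hderiv x hx).continuousAt.continuousWithinAt)
    (fun x hx => (hderiv x (interior_subset hx)).hasDerivWithinAt) fun x hx => ?_
  rw [interior_Ioo] at hx
  exact div_nonpos_of_nonpos_of_nonneg (numerator_of_deriv_weightedLogMeanNumerator_nonpos ht x)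
    (by positivity)

theorem stmt6_general (t : ℝ) (ht : 0 < t) :
    (t ≤ 1 → ∀ v w : ℝ, 0 < v → v < 1 → 0 < w → w < 1 → v ≤ w →
      (1 / Real.log t) * ((1 - v) / v * (t - t ^ (1 - v)) + v / (1 - v) * (t ^ (1 - v) - 1)) ≤
      (1 / Real.log t) * ((1 - w) / w * (t - t ^ (1 - w)) + w / (1 - w) * (t ^ (1 - w) - 1))) ∧
    (1 ≤ t → ∀ v w : ℝ, 0 < v → v < 1 → 0 < w → w < 1 → v ≤ w →
      (1 / Real.log t) * ((1 - w) / w * (t - t ^ (1 - w)) + w / (1 - w) * (t ^ (1 - w) - 1)) ≤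
      (1 / Real.log t) * ((1 - v) / v * (t - t ^ (1 - v)) + v / (1 - v) * (t ^ (1 - v) - 1))) := by
  have hanti := antitoneOn_weightedLogMeanNumerator ht
  constructor
  · intro hle v w hv hv₁ hw hw₁ hvw
    have hlog : 1 / log t ≤ 0 := one_div_nonpos.2 (log_nonpos ht.le hle)
    exact mul_le_mul_of_nonpos_left (hanti ⟨hv, hv₁⟩ ⟨hw, hw₁⟩ hvw) hlog
  · intro hge v w hv hv₁ hw hw₁ hvw
    have hlog : 0 ≤ 1 / log t := one_div_nonneg.2 (log_nonneg hge)
    exact mul_le_mul_of_nonneg_left (hanti ⟨hv, hv₁⟩ ⟨hw, hw₁⟩ hvw) hlog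

theorem stmt6 (t : ℝ) (ht : 0 < t) (ht1 : t ≠ 1) :
    (t ≤ 1 → ∀ v w : ℝ, 0 < v → v < 1 → 0 < w → w < 1 → v ≤ w →
      (1 / Real.log t) * ((1 - v) / v * (t - t ^ (1 - v)) + v / (1 - v) * (t ^ (1 - v) - 1)) ≤
      (1 / Real.log t) * ((1 - w) / w * (t - t ^ (1 - w)) + w / (1 - w) * (t ^ (1 - w) - 1))) ∧
    (1 ≤ t → ∀ v w : ℝ, 0 < v → v < 1 → 0 < w → w < 1 → v ≤ w →
      (1 / Real.log t) * ((1 - w) / w * (t - t ^ (1 - w)) + w / (1 - w) * (t ^ (1 - w) - 1)) ≤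
      (1 / Real.log t) * ((1 - v) / v * (t - t ^ (1 - v)) + v / (1 - v) * (t ^ (1 - v) - 1))) :=
  stmt6_general t ht
end

section
/- For $a, b > 0$ and $v \in (0,1)$, one has $\frac{2ab}{a+b} \le \sqrt{\frac{1}{\frac{1-v}{a}+\frac{v}{b}} \cdot \frac{1}{\frac{v}{a}+\frac{1-v}{b}}} \le \sqrt{ab}$. -/
/-!
The reciprocals `x = 1/H_v(a,b)` and `y = 1/H_{1-v}(a,b)` are the two swapped convex combinations
of `1/a` and `1/b`. Hence `x + y = 1/a + 1/b`, i.e. the harmonic mean of `H_v` and `H_{1-v}` is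
`H(a,b)`, and HM–GM gives the left inequality. For the right one,
`x y = 1/(ab) + v (1 - v) (1/a - 1/b)² ≥ 1/(ab)`.
-/

theorem Real.two_div_one_div_add_one_div_le_sqrt_mul {p q : ℝ} (hp : 0 < p) (hq : 0 < q) :
    2 / (1 / p + 1 / q) ≤ √(p * q) := by
  rw [Real.le_sqrt (by positivity) (by positivity), div_pow, div_le_iff₀ (by positivity)]
  field_simp
  nlinarith [sq_nonneg (p - q), mul_pos hp hq]

theorem mul_le_convexComb_mul_convexComb_swap {R : Type*} [CommRing R] [LinearOrder R]
    [IsStrictOrderedRing R] {v : R} (hv₀ : 0 ≤ v) (hv₁ : v ≤ 1) (p q : R) :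
    p * q ≤ ((1 - v) * p + v * q) * (v * p + (1 - v) * q) := by
  nlinarith [mul_nonneg (mul_nonneg hv₀ (sub_nonneg.2 hv₁)) (sq_nonneg (p - q))]

theorem stmt8 (a b v : ℝ) (ha : 0 < a) (hb : 0 < b) (hv0 : 0 < v) (hv1 : v < 1) :
    2 * a * b / (a + b) ≤
      Real.sqrt ((1 / ((1 - v) / a + v / b)) * (1 / (v / a + (1 - v) / b))) ∧
    Real.sqrt ((1 / ((1 - v) / a + v / b)) * (1 / (v / a + (1 - v) / b))) ≤ Real.sqrt (a * b) := by
  have hprod : a⁻¹ * b⁻¹ ≤ ((1 - v) / a + v / b) * (v / a + (1 - v) / b) := by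
    simpa only [div_eq_mul_inv] using
      mul_le_convexComb_mul_convexComb_swap hv0.le hv1.le a⁻¹ b⁻¹
  have hv1' : 0 < 1 - v := sub_pos.2 hv1
  set x := (1 - v) / a + v / b
  set y := v / a + (1 - v) / b
  have hx : 0 < x := by positivity
  have hy : 0 < y := by positivity
  have hsum : x + y = 1 / a + 1 / b := by ring
  constructor
  · calc 2 * a * b / (a + b) = 2 / (1 / (1 / x) + 1 / (1 / y)) := by
          rw [one_div_one_div, one_div_one_div, hsum]
          field_simp
          ring
      _ ≤ √(1 / x * (1 / y)) :=
          Real.two_div_one_div_add_one_div_le_sqrt_mul (by positivity) (by positivity)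
  · apply Real.sqrt_le_sqrt
    rw [one_div_mul_one_div, one_div_le (by positivity) (by positivity), one_div, mul_inv]
    exact hprod
end

section
/- For $a, b > 0$ and $v \in (0,1)$, one has $\frac{2ab}{a+b} \le \frac{2}{\frac{1}{a^{1-v}b^v} + \frac{1}{a^v b^{1-v}}} \le \sqrt{ab}$. -/
/-!
Put `x = a ^ (1 - v) * b ^ v` and `y = a ^ v * b ^ (1 - v)`. Then `x * y = a * b`, so the middle
term is the harmonic mean `2 * a * b / (x + y)` of `x` and `y`. Weighted AM-GM bounds `x` and `y`
by `(1 - v) * a + v * b` and `v * a + (1 - v) * b`, whence `x + y ≤ a + b` and the left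
inequality. The right one is HM ≤ GM for `x, y`, whose geometric mean is `√(a * b)`.
-/

namespace Real

theorem rpow_one_sub_mul_rpow_mul_rpow_mul_rpow_one_sub {a b : ℝ} (ha : 0 ≤ a) (hb : 0 ≤ b)
    (v : ℝ) : a ^ (1 - v) * b ^ v * (a ^ v * b ^ (1 - v)) = a * b := by
  have hv : 1 - v + v ≠ 0 := by norm_num
  rw [mul_mul_mul_comm, ← rpow_add' ha hv, ← rpow_add' hb (by rwa [add_comm]),
    add_comm v, sub_add_cancel, rpow_one, rpow_one]

theorem rpow_one_sub_mul_rpow_add_rpow_mul_rpow_one_sub_le {a b v : ℝ} (ha : 0 ≤ a)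
    (hb : 0 ≤ b) (hv0 : 0 ≤ v) (hv1 : v ≤ 1) :
    a ^ (1 - v) * b ^ v + a ^ v * b ^ (1 - v) ≤ a + b := by
  have hx := geom_mean_le_arith_mean2_weighted (sub_nonneg.2 hv1) hv0 ha hb (sub_add_cancel 1 v)
  have hy := geom_mean_le_arith_mean2_weighted hv0 (sub_nonneg.2 hv1) ha hb (add_sub_cancel v 1)
  linarith

theorem two_div_one_div_add_one_div {x y : ℝ} (hx : x ≠ 0) (hy : y ≠ 0) :
    2 / (1 / x + 1 / y) = 2 * (x * y) / (x + y) := by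
  rw [div_add_div _ _ hx hy, div_div_eq_mul_div, one_mul, mul_one, add_comm y]

theorem two_div_one_div_add_one_div_le_sqrt_mul_s9 {x y : ℝ} (hx : 0 < x) (hy : 0 < y) :
    2 / (1 / x + 1 / y) ≤ √(x * y) := by
  have hsq : √(x * y) * √(x * y) = x * y := mul_self_sqrt (mul_pos hx hy).le
  have hamgm : 2 * √(x * y) ≤ x + y := by
    rw [sqrt_mul hx.le] at hsq ⊢
    nlinarith [sq_nonneg (√x - √y), mul_self_sqrt hx.le, mul_self_sqrt hy.le]
  rw [two_div_one_div_add_one_div hx.ne' hy.ne', div_le_iff₀ (by positivity)]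
  calc 2 * (x * y) = √(x * y) * (2 * √(x * y)) := by linear_combination (-2) * hsq
    _ ≤ √(x * y) * (x + y) := by gcongr

end Real

theorem stmt9 (a b v : ℝ) (ha : 0 < a) (hb : 0 < b) (hv0 : 0 < v) (hv1 : v < 1) :
    2 * a * b / (a + b) ≤ 2 / (1 / (a ^ (1 - v) * b ^ v) + 1 / (a ^ v * b ^ (1 - v))) ∧
    2 / (1 / (a ^ (1 - v) * b ^ v) + 1 / (a ^ v * b ^ (1 - v))) ≤ Real.sqrt (a * b) := by
  have hx : 0 < a ^ (1 - v) * b ^ v := by positivity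
  have hy : 0 < a ^ v * b ^ (1 - v) := by positivity
  have hxy := Real.rpow_one_sub_mul_rpow_mul_rpow_mul_rpow_one_sub ha.le hb.le v
  constructor
  · rw [Real.two_div_one_div_add_one_div hx.ne' hy.ne', hxy, mul_assoc]
    exact div_le_div_of_nonneg_left (by positivity) (by positivity)
      (Real.rpow_one_sub_mul_rpow_add_rpow_mul_rpow_one_sub_le ha.le hb.le hv0.le hv1.le)
  · simpa only [hxy] using Real.two_div_one_div_add_one_div_le_sqrt_mul_s9 hx hy
end

section
/- For $a, b > 0$ with $a \ne b$ and $v \in (0,1)$, one has $L(a,b) \le \frac{1}{2} L_v(a,b) + \frac{1}{2} L_{1-v}(a,b) \le \frac{a+b}{2}$, where $L(a,b) = \frac{a-b}{\log a - \log b}$ and $L_v(a,b) = \frac{1}{\log a - \log b}\left(\frac{1-v}{v}(a - a^{1-v}b^v) + \frac{v}{1-v}(a^{1-v}b^v - b)\right)$. -/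
/-!
Put `g s = a ^ s * b ^ (1 - s)`. Since `(log a - log b) * ∫ s in x..y, g s = g y - g x`,
`L(a, b)` is the mean of `g` over `[0, 1]`, and `L_v + L_{1-v}` is a combination of the
integrals of `g` over `[0, 1]` and over `[v, 1 - v]`. The symmetrisation
`g s + g (1 - s) = 2 √(ab) cosh ((s - 1/2) (log a - log b))` increases with `|s - 1/2|` and is
at most `a + b` on `[0, 1]`. Hence the mean of `g` over the middle interval `[v, 1 - v]` is at
most its mean over `[0, 1]`, which is the lower bound, and the bound `a + b` gives the upper one.
-/

open Real Set intervalIntegral MeasureTheory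

noncomputable def weightedLogMean (v a b : ℝ) : ℝ :=
  1 / (log a - log b) *
    ((1 - v) / v * (a - a ^ (1 - v) * b ^ v) + v / (1 - v) * (a ^ (1 - v) * b ^ v - b))

section Averages

variable {φ : ℝ → ℝ} {x y z : ℝ}

lemma integral_le_mul_of_le {M : ℝ} (hxy : x ≤ y) (hφ : IntervalIntegrable φ volume x y)
    (h : ∀ s ∈ Icc x y, φ s ≤ M) : ∫ s in x..y, φ s ≤ (y - x) * M := by
  simpa using integral_mono_on hxy hφ intervalIntegrable_const h

lemma mul_le_integral_of_le {m : ℝ} (hxy : x ≤ y) (hφ : IntervalIntegrable φ volume x y)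
    (h : ∀ s ∈ Icc x y, m ≤ φ s) : (y - x) * m ≤ ∫ s in x..y, φ s := by
  simpa using integral_mono_on hxy intervalIntegrable_const hφ h

lemma mul_integral_le_mul_integral (hxy : x ≤ y) (hyz : y ≤ z)
    (hφxy : IntervalIntegrable φ volume x y) (hφyz : IntervalIntegrable φ volume y z)
    (hleft : ∀ s ∈ Icc x y, φ y ≤ φ s) (hright : ∀ s ∈ Icc y z, φ s ≤ φ y) :
    (y - x) * ∫ s in y..z, φ s ≤ (z - y) * ∫ s in x..y, φ s :=
  calc (y - x) * ∫ s in y..z, φ s ≤ (y - x) * ((z - y) * φ y) :=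
        mul_le_mul_of_nonneg_left (integral_le_mul_of_le hyz hφyz hright) (sub_nonneg.2 hxy)
    _ = (z - y) * ((y - x) * φ y) := by ring
    _ ≤ (z - y) * ∫ s in x..y, φ s :=
        mul_le_mul_of_nonneg_left (mul_le_integral_of_le hxy hφxy hleft) (sub_nonneg.2 hyz)

lemma integral_add_comp_one_sub (hφ : Continuous φ) (x y : ℝ) :
    ∫ s in x..y, (φ s + φ (1 - s)) = (∫ s in x..y, φ s) + ∫ s in 1 - y..1 - x, φ s := by
  have hφ' : Continuous fun s => φ (1 - s) := by fun_prop
  rw [integral_add (hφ.intervalIntegrable x y) (hφ'.intervalIntegrable x y),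
    integral_comp_sub_left φ]

lemma integral_zero_add_comp_one_sub (hφ : Continuous φ) (v : ℝ) :
    ∫ s in (0 : ℝ)..v, (φ s + φ (1 - s)) = (∫ s in (0 : ℝ)..1, φ s) - ∫ s in v..1 - v, φ s := by
  rw [integral_add_comp_one_sub hφ, sub_zero, eq_sub_iff_add_eq, add_right_comm,
    integral_add_adjacent_intervals (hφ.intervalIntegrable _ _) (hφ.intervalIntegrable _ _),
    integral_add_adjacent_intervals (hφ.intervalIntegrable _ _) (hφ.intervalIntegrable _ _)]

lemma integral_symm_add_comp_one_sub (hφ : Continuous φ) (v : ℝ) :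
    ∫ s in v..1 - v, (φ s + φ (1 - s)) = 2 * ∫ s in v..1 - v, φ s := by
  rw [integral_add_comp_one_sub hφ, sub_sub_cancel, two_mul]

end Averages

section GeometricInterpolation

variable {a b : ℝ}

lemma continuous_rpow_mul_rpow_one_sub (ha : 0 < a) (hb : 0 < b) :
    Continuous fun s : ℝ => a ^ s * b ^ (1 - s) := by
  fun_prop (disch := positivity)

lemma hasDerivAt_rpow_mul_rpow_one_sub (ha : 0 < a) (hb : 0 < b) (s : ℝ) :
    HasDerivAt (fun s : ℝ => a ^ s * b ^ (1 - s))
      ((log a - log b) * (a ^ s * b ^ (1 - s))) s := by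
  refine (((hasDerivAt_id' s).const_rpow ha).mul
    (((hasDerivAt_id' s).const_sub 1).const_rpow hb)).congr_deriv ?_
  ring

lemma integral_rpow_mul_rpow_one_sub (ha : 0 < a) (hb : 0 < b) (hab : a ≠ b) (x y : ℝ) :
    ∫ s in x..y, a ^ s * b ^ (1 - s) =
      (a ^ y * b ^ (1 - y) - a ^ x * b ^ (1 - x)) / (log a - log b) := by
  have ht : log a - log b ≠ 0 := sub_ne_zero.2 fun h => hab (log_injOn_pos ha hb h)
  rw [eq_div_iff ht, mul_comm, ← intervalIntegral.integral_const_mul]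
  exact integral_eq_sub_of_hasDerivAt (fun s _ => hasDerivAt_rpow_mul_rpow_one_sub ha hb s)
    ((continuous_const.mul (continuous_rpow_mul_rpow_one_sub ha hb)).intervalIntegrable x y)

lemma div_log_sub_log_eq_integral (ha : 0 < a) (hb : 0 < b) (hab : a ≠ b) :
    (a - b) / (log a - log b) = ∫ s in (0 : ℝ)..1, a ^ s * b ^ (1 - s) := by
  simp [integral_rpow_mul_rpow_one_sub ha hb hab]

lemma rpow_mul_rpow_one_sub_add_eq_cosh (ha : 0 < a) (hb : 0 < b) (s : ℝ) :
    a ^ s * b ^ (1 - s) + a ^ (1 - s) * b ^ s =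
      2 * exp ((log a + log b) / 2) * cosh ((s - 1 / 2) * (log a - log b)) := by
  rw [cosh_eq, show ∀ p q r : ℝ, 2 * p * ((q + r) / 2) = p * q + p * r by intros; ring,
    ← exp_add, ← exp_add]
  simp only [rpow_def_of_pos ha, rpow_def_of_pos hb, ← exp_add]
  ring_nf

lemma rpow_mul_rpow_one_sub_add_le (ha : 0 < a) (hb : 0 < b) {s y : ℝ}
    (h : |s - 1 / 2| ≤ |y - 1 / 2|) :
    a ^ s * b ^ (1 - s) + a ^ (1 - s) * b ^ s ≤ a ^ y * b ^ (1 - y) + a ^ (1 - y) * b ^ y := by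
  rw [rpow_mul_rpow_one_sub_add_eq_cosh ha hb, rpow_mul_rpow_one_sub_add_eq_cosh ha hb]
  gcongr
  rw [cosh_le_cosh, abs_mul, abs_mul]
  gcongr

lemma rpow_mul_rpow_one_sub_add_le_add (ha : 0 < a) (hb : 0 < b) {s : ℝ} (hs : s ∈ Icc 0 1) :
    a ^ s * b ^ (1 - s) + a ^ (1 - s) * b ^ s ≤ a + b := by
  have h := rpow_mul_rpow_one_sub_add_le ha hb (s := s) (y := 0)
    (by rw [show |(0 : ℝ) - 1 / 2| = 1 / 2 by norm_num, abs_le]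
        constructor <;> linarith [hs.1, hs.2])
  simpa [add_comm] using h

variable {v : ℝ}

lemma integral_rpow_mul_rpow_one_sub_symm_le (ha : 0 < a) (hb : 0 < b) (hv0 : 0 ≤ v)
    (hv : v ≤ 1 / 2) :
    ∫ s in v..1 - v, a ^ s * b ^ (1 - s) ≤ (1 - 2 * v) * ∫ s in (0 : ℝ)..1, a ^ s * b ^ (1 - s) := by
  set g : ℝ → ℝ := fun s => a ^ s * b ^ (1 - s)
  have hg : Continuous g := continuous_rpow_mul_rpow_one_sub ha hb
  have hφ : Continuous fun s => g s + g (1 - s) := by fun_prop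
  have key := mul_integral_le_mul_integral (x := 0) (y := v) (z := 1 - v) hv0 (by linarith)
    (hφ.intervalIntegrable _ _) (hφ.intervalIntegrable _ _)
    (fun s hs => by
      simp only [g, sub_sub_cancel]
      exact rpow_mul_rpow_one_sub_add_le ha hb (by
        rw [abs_of_nonpos (by linarith), abs_of_nonpos (by linarith [hs.2])]; linarith [hs.2]))
    (fun s hs => by
      simp only [g, sub_sub_cancel]
      exact rpow_mul_rpow_one_sub_add_le ha hb (by
        rw [abs_of_nonpos (by linarith : v - 1 / 2 ≤ 0)]
        exact abs_le.2 ⟨by linarith [hs.1], by linarith [hs.2]⟩))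
  rw [integral_zero_add_comp_one_sub hg, integral_symm_add_comp_one_sub hg] at key
  linarith

lemma integral_rpow_mul_rpow_one_sub_le_add (ha : 0 < a) (hb : 0 < b) (hv0 : 0 ≤ v)
    (hv : v ≤ 1 / 2) :
    (∫ s in (0 : ℝ)..1, a ^ s * b ^ (1 - s)) - ∫ s in v..1 - v, a ^ s * b ^ (1 - s) ≤
        v * (a + b) ∧
      2 * ∫ s in v..1 - v, a ^ s * b ^ (1 - s) ≤ (1 - 2 * v) * (a + b) := by
  set g : ℝ → ℝ := fun s => a ^ s * b ^ (1 - s)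
  have hg : Continuous g := continuous_rpow_mul_rpow_one_sub ha hb
  have hφ : Continuous fun s => g s + g (1 - s) := by fun_prop
  have hφ_le : ∀ s ∈ Icc (0 : ℝ) 1, g s + g (1 - s) ≤ a + b := fun s hs => by
    simpa only [g, sub_sub_cancel] using rpow_mul_rpow_one_sub_add_le_add ha hb hs
  have hout := integral_le_mul_of_le hv0 (hφ.intervalIntegrable 0 v)
    fun s hs => hφ_le s ⟨hs.1, by linarith [hs.2]⟩
  have hmid := integral_le_mul_of_le (by linarith) (hφ.intervalIntegrable v (1 - v))
    fun s hs => hφ_le s ⟨by linarith [hs.1], by linarith [hs.2]⟩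
  rw [integral_zero_add_comp_one_sub hg] at hout
  rw [integral_symm_add_comp_one_sub hg] at hmid
  constructor <;> linarith

lemma weightedLogMean_add_weightedLogMean_one_sub (ha : 0 < a) (hb : 0 < b) (hab : a ≠ b)
    (hv0 : v ≠ 0) (hv1 : 1 - v ≠ 0) :
    weightedLogMean v a b + weightedLogMean (1 - v) a b =
      ((1 - v) / v + v / (1 - v)) * (∫ s in (0 : ℝ)..1, a ^ s * b ^ (1 - s)) -
        ((1 - v) / v - v / (1 - v)) * ∫ s in v..1 - v, a ^ s * b ^ (1 - s) := by
  have ht : log a - log b ≠ 0 := sub_ne_zero.2 fun h => hab (log_injOn_pos ha hb h)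
  rw [← div_log_sub_log_eq_integral ha hb hab, integral_rpow_mul_rpow_one_sub ha hb hab]
  simp only [weightedLogMean, sub_sub_cancel]
  field_simp
  ring

lemma logMean_le_weightedLogMean_avg_le_of_le_half (ha : 0 < a) (hb : 0 < b) (hab : a ≠ b)
    (hv0 : 0 < v) (hv : v ≤ 1 / 2) :
    (a - b) / (log a - log b) ≤ (weightedLogMean v a b + weightedLogMean (1 - v) a b) / 2 ∧
      (weightedLogMean v a b + weightedLogMean (1 - v) a b) / 2 ≤ (a + b) / 2 := by
  have hv1 : 0 < 1 - v := by linarith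
  have hmid := integral_rpow_mul_rpow_one_sub_symm_le ha hb hv0.le hv
  obtain ⟨hout, hmid'⟩ := integral_rpow_mul_rpow_one_sub_le_add ha hb hv0.le hv
  rw [weightedLogMean_add_weightedLogMean_one_sub ha hb hab hv0.ne' hv1.ne',
    div_log_sub_log_eq_integral ha hb hab]
  set L := ∫ s in (0 : ℝ)..1, a ^ s * b ^ (1 - s)
  set Q := ∫ s in v..1 - v, a ^ s * b ^ (1 - s)
  have hsum : ((1 - v) / v + v / (1 - v)) * L - ((1 - v) / v - v / (1 - v)) * Q =
      (((1 - v) ^ 2 + v ^ 2) * L - (1 - 2 * v) * Q) / (v * (1 - v)) := by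
    field_simp
    ring
  rw [hsum, div_div]
  constructor
  · rw [le_div_iff₀ (by positivity)]
    nlinarith [mul_le_mul_of_nonneg_left hmid (by linarith : (0 : ℝ) ≤ 1 - 2 * v)]
  · rw [div_le_div_iff₀ (by positivity) two_pos]
    nlinarith [mul_le_mul_of_nonneg_left hout (by positivity : (0 : ℝ) ≤ (1 - v) ^ 2 + v ^ 2),
      mul_le_mul_of_nonneg_left hmid' (sq_nonneg v)]

theorem stmt10 (a b v : ℝ) (ha : 0 < a) (hb : 0 < b) (hab : a ≠ b)
    (hv0 : 0 < v) (hv1 : v < 1) :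
    (a - b) / (Real.log a - Real.log b) ≤
      (1 / 2) * ((1 / (Real.log a - Real.log b)) *
        ((1 - v) / v * (a - a ^ (1 - v) * b ^ v) + v / (1 - v) * (a ^ (1 - v) * b ^ v - b))) +
      (1 / 2) * ((1 / (Real.log a - Real.log b)) *
        (v / (1 - v) * (a - a ^ v * b ^ (1 - v)) + (1 - v) / v * (a ^ v * b ^ (1 - v) - b))) ∧
    (1 / 2) * ((1 / (Real.log a - Real.log b)) *
        ((1 - v) / v * (a - a ^ (1 - v) * b ^ v) + v / (1 - v) * (a ^ (1 - v) * b ^ v - b))) +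
      (1 / 2) * ((1 / (Real.log a - Real.log b)) *
        (v / (1 - v) * (a - a ^ v * b ^ (1 - v)) + (1 - v) / v * (a ^ v * b ^ (1 - v) - b)))
      ≤ (a + b) / 2 := by
  wlog hv : v ≤ 1 / 2 generalizing v
  · have h := this (1 - v) (by linarith) (by linarith) (by linarith)
    rw [sub_sub_cancel] at h
    exact ⟨by linarith [h.1], by linarith [h.2]⟩
  obtain ⟨h₁, h₂⟩ := logMean_le_weightedLogMean_avg_le_of_le_half ha hb hab hv0 hv
  simp only [weightedLogMean, sub_sub_cancel] at h₁ h₂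
  constructor <;> linarith
end GeometricInterpolation
end

section
/- For $t \ge 1$ and $v \in [0, 1/2)$, one has $(1-2v)(t-1) - t^{1-v} + t^v \ge 0$. -/
/-!
Writing `t = exp (2 x)` with `x ≥ 0` and `p = 1 - 2 v ∈ (0, 1]`, one has
`t - 1 = 2 eˣ sinh x` and `t ^ (1 - v) - t ^ v = 2 eˣ sinh (p x)`, so the claim becomes
`sinh (p x) ≤ p sinh x`. This holds because `sinh` is convex on `[0, ∞)` and vanishes at `0`.
-/

open Real Set

lemma Real.exp_sub_exp (a b : ℝ) : exp a - exp b = 2 * exp ((a + b) / 2) * sinh ((a - b) / 2) := by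
  calc exp a - exp b = exp ((a + b) / 2 + (a - b) / 2) - exp ((a + b) / 2 + -((a - b) / 2)) := by
        ring_nf
    _ = 2 * exp ((a + b) / 2) * sinh ((a - b) / 2) := by
        rw [exp_add, exp_add, sinh_eq]; ring

lemma Real.convexOn_sinh : ConvexOn ℝ (Ici 0) sinh := by
  refine MonotoneOn.convexOn_of_deriv (convex_Ici 0) continuous_sinh.continuousOn
    differentiable_sinh.differentiableOn ?_
  rw [deriv_sinh, interior_Ici]
  intro x hx y hy hxy
  exact cosh_le_cosh.2 (by rwa [abs_of_pos hx, abs_of_pos hy])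

lemma Real.sinh_mul_le_mul_sinh {p x : ℝ} (hp₀ : 0 ≤ p) (hp₁ : p ≤ 1) (hx : 0 ≤ x) :
    sinh (p * x) ≤ p * sinh x := by
  have := convexOn_sinh.2 (mem_Ici.2 hx) (mem_Ici.2 le_rfl) hp₀ (sub_nonneg.2 hp₁)
    (add_sub_cancel p 1)
  simpa using this

theorem stmt12 (t v : ℝ) (ht : 1 ≤ t) (hv0 : 0 ≤ v) (hv : v < 1 / 2) :
    0 ≤ (1 - 2 * v) * (t - 1) - t ^ (1 - v) + t ^ v := by
  have ht₀ : 0 < t := one_pos.trans_le ht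
  set x := log t / 2
  have hx : 0 ≤ x := div_nonneg (log_nonneg ht) zero_le_two
  have ht_sub : t - 1 = 2 * exp x * sinh x := by
    have := exp_sub_exp (log t) 0
    rwa [exp_log ht₀, exp_zero, add_zero, sub_zero] at this
  have hpow_sub : t ^ (1 - v) - t ^ v = 2 * exp x * sinh ((1 - 2 * v) * x) := by
    rw [rpow_def_of_pos ht₀, rpow_def_of_pos ht₀, exp_sub_exp]
    congr 3 <;> simp only [x] <;> ring
  have hsinh := sinh_mul_le_mul_sinh (p := 1 - 2 * v) (by linarith) (by linarith) hx
  calc 0 ≤ 2 * exp x * ((1 - 2 * v) * sinh x - sinh ((1 - 2 * v) * x)) :=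
        mul_nonneg (by positivity) (sub_nonneg.2 hsinh)
    _ = (1 - 2 * v) * (t - 1) - t ^ (1 - v) + t ^ v := by
        linear_combination hpow_sub - (1 - 2 * v) * ht_sub
end

section
/- For $t \ge 1$ and $v \in [0,1]$, one has $1 - v t^{v-1} - (1-v)t^v + v t^v \log t \ge 0$. -/
theorem stmt17_general (t v : ℝ) (ht : 1 ≤ t) (hv0 : 0 ≤ v) :
    0 ≤ 1 - v * t ^ (v - 1) - (1 - v) * t ^ v + v * t ^ v * Real.log t := by
  have ht0 : 0 < t := by linarith
  -- `x - 1 ≤ x log x` at `x = t ^ v`, whose logarithm is `v log t`.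
  have hlog : t ^ v - 1 ≤ t ^ v * (v * Real.log t) := by
    rw [← Real.log_rpow ht0]
    exact Real.self_sub_one_le_mul_log (Real.rpow_nonneg ht0.le v)
  have hmono : t ^ (v - 1) ≤ t ^ v := Real.rpow_le_rpow_of_exponent_le ht (by linarith)
  linear_combination hlog + v * hmono

theorem stmt17 (t v : ℝ) (ht : 1 ≤ t) (hv0 : 0 ≤ v) (hv1 : v ≤ 1) :
    0 ≤ 1 - v * t ^ (v - 1) - (1 - v) * t ^ v + v * t ^ v * Real.log t :=
  stmt17_general t v ht hv0
end

section
/- For $t \ge 1$ and $v \in [0,1]$, one has $v(1-v)t^{1-v}\log t + v(1-v)\left((1-v)t + v\right)\log t \ge 2\left((1-v)^2(t - t^{1-v}) + v^2(t^{1-v} - 1)\right)$. -/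
/-!
Both terms come from the inequality `2 (y - 1) ≤ (1 + y) log y` for `y ≥ 1` (the logarithmic
mean is at most the arithmetic mean), applied to `y = t ^ v` (then multiplied by `t ^ (1 - v)`)
and to `y = t ^ (1 - v)`. The combination with weights `(1 - v) ^ 2` and `v ^ 2` is exactly the
claim.
-/

open Real Set

lemma hasDerivAt_one_add_mul_log_sub {x : ℝ} (hx : x ≠ 0) :
    HasDerivAt (fun y ↦ (1 + y) * log y - 2 * (y - 1)) (log x + x⁻¹ - 1) x := by
  refine ((((hasDerivAt_id x).const_add 1).mul (hasDerivAt_log hx)).sub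
    (((hasDerivAt_id x).sub_const 1).const_mul 2)).congr_deriv ?_
  simp only [id, one_mul, mul_one, add_mul, mul_inv_cancel₀ hx]
  ring

lemma two_mul_sub_one_le_one_add_mul_log {y : ℝ} (hy : 1 ≤ y) :
    2 * (y - 1) ≤ (1 + y) * log y := by
  have hmono : MonotoneOn (fun y ↦ (1 + y) * log y - 2 * (y - 1)) (Ici 1) := by
    refine monotoneOn_of_hasDerivWithinAt_nonneg (convex_Ici 1) ?_
      (fun x hx ↦ (hasDerivAt_one_add_mul_log_sub
        (by rw [interior_Ici] at hx; exact (zero_lt_one.trans hx).ne')).hasDerivWithinAt) ?_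
    · exact ((continuousOn_const.add continuousOn_id).mul
        (continuousOn_log.mono fun x hx ↦ (zero_lt_one.trans_le hx).ne')).sub (by fun_prop)
    · intro x hx
      rw [interior_Ici] at hx
      linarith [one_sub_inv_le_log_of_pos (zero_lt_one.trans hx)]
  simpa using hmono self_mem_Ici hy hy

lemma two_mul_rpow_sub_one_le {t s : ℝ} (ht : 1 ≤ t) (hs : 0 ≤ s) :
    2 * (t ^ s - 1) ≤ (1 + t ^ s) * (s * log t) := by
  rw [← log_rpow (zero_lt_one.trans_le ht)]
  exact two_mul_sub_one_le_one_add_mul_log (one_le_rpow ht hs)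

theorem stmt18 (t v : ℝ) (ht : 1 ≤ t) (hv0 : 0 ≤ v) (hv1 : v ≤ 1) :
    2 * ((1 - v) ^ 2 * (t - t ^ (1 - v)) + v ^ 2 * (t ^ (1 - v) - 1)) ≤
      v * (1 - v) * t ^ (1 - v) * Real.log t + v * (1 - v) * ((1 - v) * t + v) * Real.log t := by
  have hw0 : 0 ≤ 1 - v := sub_nonneg.mpr hv1
  have hsplit : t ^ (1 - v) * t ^ v = t := by
    rw [← rpow_add (zero_lt_one.trans_le ht)]
    norm_num
  have hv : 2 * (t - t ^ (1 - v)) ≤ (t ^ (1 - v) + t) * (v * log t) := by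
    have hscaled := mul_le_mul_of_nonneg_left (two_mul_rpow_sub_one_le ht hv0)
      (rpow_nonneg (zero_le_one.trans ht) (1 - v))
    linear_combination hscaled + (v * log t - 2) * hsplit
  have hw := two_mul_rpow_sub_one_le ht hw0
  linear_combination (1 - v) ^ 2 * hv + v ^ 2 * hw
end

section
/- For $t > 0$, $t \ne 1$, and $v \in (0,1)$, one has $\frac{1}{\log t}\left(\frac{1-v}{v}(t - t^{1-v}) + \frac{v}{1-v}(t^{1-v} - 1)\right) \le \frac{1}{2} t^{1-v} + \frac{1}{2}\left((1-v)t + v\right)$. -/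
/-!
Substituting `u = t ^ (1 - v)`, so that `log t - log u = v log t` and `log u = (1 - v) log t`,
the left-hand side becomes `(1 - v) L(t, u) + v L(u, 1)` for the logarithmic mean
`L(a, b) = (a - b) / (log a - log b)`. The inequality `L ≤ A` between the logarithmic and the
arithmetic mean then bounds it by `(1 - v) (t + u) / 2 + v (u + 1) / 2`, which is the right-hand side.
`L ≤ A` reduces to `2 (x - 1) / (x + 1) ≤ log x` for `x ≥ 1`, the first term of the series
`log (1 + 1/a) = ∑ 2 / (2k + 1) · (2a + 1)^(-(2k + 1))`.
-/

open Real

lemma two_div_two_mul_add_one_le_log_one_add_inv {a : ℝ} (ha : 0 < a) :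
    2 / (2 * a + 1) ≤ log (1 + a⁻¹) := by
  have hsum := hasSum_log_one_add_inv ha
  have hterms : ∀ k : ℕ, 0 ≤ 2 * (1 / (2 * (k : ℝ) + 1)) * (1 / (2 * a + 1)) ^ (2 * k + 1) :=
    fun k ↦ by positivity
  simpa [div_eq_mul_inv] using le_hasSum hsum 0 fun k _ ↦ hterms k

lemma two_mul_sub_one_div_add_one_le_log {x : ℝ} (hx : 1 ≤ x) :
    2 * (x - 1) / (x + 1) ≤ log x := by
  rcases hx.eq_or_lt with rfl | hx
  · simp
  have hx' : 0 < x - 1 := sub_pos.mpr hx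
  have h := two_div_two_mul_add_one_le_log_one_add_inv (inv_pos.mpr hx')
  rwa [inv_inv, add_sub_cancel, show 2 / (2 * (x - 1)⁻¹ + 1) = 2 * (x - 1) / (x + 1) by
    field_simp; ring] at h

-- For `a = b` the left-hand side is the junk value `0`.
lemma sub_div_log_sub_log_le_add_div_two {a b : ℝ} (ha : 0 < a) (hb : 0 < b) :
    (a - b) / (log a - log b) ≤ (a + b) / 2 := by
  wlog hba : b ≤ a generalizing a b
  · rw [← neg_div_neg_eq, neg_sub, neg_sub, add_comm]
    exact this hb ha (le_of_not_ge hba)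
  rcases hba.eq_or_lt with rfl | hba
  · simp only [sub_self, div_zero, add_self_div_two]
    exact ha.le
  have hlog : 2 * (a - b) / (a + b) ≤ log a - log b := by
    rw [← log_div ha.ne' hb.ne']
    convert two_mul_sub_one_div_add_one_le_log ((one_le_div hb).mpr hba.le) using 1
    field_simp
  have hpos : 0 < 2 * (a - b) / (a + b) := by
    have := sub_pos.mpr hba
    positivity
  rw [div_le_iff₀ (hpos.trans_le hlog)]
  calc a - b = (a + b) / 2 * (2 * (a - b) / (a + b)) := by field_simp
    _ ≤ (a + b) / 2 * (log a - log b) := by gcongr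

theorem stmt19 (t v : ℝ) (ht : 0 < t) (ht1 : t ≠ 1) (hv0 : 0 < v) (hv1 : v < 1) :
    (1 / Real.log t) * ((1 - v) / v * (t - t ^ (1 - v)) + v / (1 - v) * (t ^ (1 - v) - 1)) ≤
      (1 / 2) * t ^ (1 - v) + (1 / 2) * ((1 - v) * t + v) := by
  set u := t ^ (1 - v)
  have hu : 0 < u := rpow_pos_of_pos ht _
  have hc : log t ≠ 0 := log_ne_zero_of_pos_of_ne_one ht ht1
  have hlogu : log u = (1 - v) * log t := log_rpow ht _
  have hmeans : (1 / log t) * ((1 - v) / v * (t - u) + v / (1 - v) * (u - 1)) =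
      (1 - v) * ((t - u) / (log t - log u)) + v * ((u - 1) / (log u - log 1)) := by
    rw [hlogu, log_one, sub_zero, show log t - (1 - v) * log t = v * log t by ring]
    field_simp
  rw [hmeans]
  calc (1 - v) * ((t - u) / (log t - log u)) + v * ((u - 1) / (log u - log 1))
      ≤ (1 - v) * ((t + u) / 2) + v * ((u + 1) / 2) := by
        gcongr ?_ * ?_ + ?_ * ?_
        · exact sub_div_log_sub_log_le_add_div_two ht hu
        · exact sub_div_log_sub_log_le_add_div_two hu one_pos
    _ = (1 / 2) * u + (1 / 2) * ((1 - v) * t + v) := by ring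
end
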